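/- arXiv:2103.15694 — 3 statements merged into one kernel-verified Lean document; each statement's English description precedes it below -/
import Mathlib

section
/- Let x : Ω → ℂ^N be a random vector with all products x_n · conj(x_{n'}) integrable and E[x_n · conj(x_{n'})] = σ² δ_{n,n'}, let F_N be the N×N unitary DFT matrix, let D ∈ ℂ^{N×N} be diagonal, and let b₁, b₂ ∈ ℂ^N. Then E[ b₁^H · diag(x)^H · F_N D F_N^H · diag(x) · b₂ ] = σ² · (tr(D)/N) · (b₁^H b₂). In particular, if b₁^H b₂ = 0, this expectation is zero. -/
/-!
Expanding the quadratic form, `E[x_{n'} conj x_n] = σ² δ_{n,n'}` kills every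
off-diagonal term, leaving `σ² ∑ₙ conj (b₁ n) Mₙₙ b₂ n` with `M = F_N D F_Nᴴ`.
Every DFT entry has modulus `1/√N`, so each diagonal entry of `M` equals `tr D / N`.
-/

open Matrix MeasureTheory

/-- The `N×N` unitary DFT matrix, `[F_N]_{ℓ,n} = (1/√N) e^{-2πi nℓ/N}`. -/
noncomputable def dftMatrix (N : ℕ) : Matrix (Fin N) (Fin N) ℂ :=
  fun l n => (1 / (Real.sqrt N : ℂ)) *
    Complex.exp (-(2 * (Real.pi : ℂ) * Complex.I * ((n : ℕ) : ℂ) * ((l : ℕ) : ℂ) / (N : ℂ)))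

open ComplexConjugate

section

variable {𝕜 ι κ : Type*} [RCLike 𝕜] [Fintype ι] [DecidableEq ι]

lemma Matrix.mul_diagonal_mul_conjTranspose_apply_self (U : Matrix κ ι 𝕜) (d : ι → 𝕜)
    (k : κ) :
    (U * diagonal d * Uᴴ) k k = ∑ i, d i * (‖U k i‖ : 𝕜) ^ 2 := by
  rw [mul_apply]
  refine Finset.sum_congr rfl fun i _ => ?_
  rw [mul_diagonal, conjTranspose_apply, RCLike.star_def, ← RCLike.mul_conj]
  ring

lemma Matrix.star_dotProduct_conjTranspose_diagonal_mul_mulVec (M : Matrix ι ι 𝕜)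
    (y b₁ b₂ : ι → 𝕜) :
    star b₁ ⬝ᵥ ((diagonal y)ᴴ * M * diagonal y) *ᵥ b₂
      = ∑ i, ∑ j, conj (b₁ i) * M i j * b₂ j * (y j * conj (y i)) := by
  simp only [diagonal_conjTranspose, dotProduct, mulVec, diagonal_mul, mul_diagonal,
    Pi.star_apply, RCLike.star_def, Finset.mul_sum]
  exact Finset.sum_congr rfl fun _ _ => Finset.sum_congr rfl fun _ _ => by ring

end

lemma norm_dftMatrix_apply {N : ℕ} (l n : Fin N) : ‖dftMatrix N l n‖ = 1 / Real.sqrt N := by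
  simp [dftMatrix, Complex.norm_exp]

lemma dftMatrix_mul_diagonal_mul_conjTranspose_apply_self {N : ℕ} (d : Fin N → ℂ)
    (l : Fin N) :
    (dftMatrix N * diagonal d * (dftMatrix N)ᴴ) l l = trace (diagonal d) / N := by
  have hnormSq (i : Fin N) : (‖dftMatrix N l i‖ : ℂ) ^ 2 = 1 / N := by
    rw [← Complex.ofReal_pow, norm_dftMatrix_apply, div_pow, one_pow,
      Real.sq_sqrt N.cast_nonneg]
    push_cast; rfl
  rw [mul_diagonal_mul_conjTranspose_apply_self, trace_diagonal, Finset.sum_div]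
  exact Finset.sum_congr rfl fun i _ => by rw [div_eq_mul_one_div, ← hnormSq i]; rfl

theorem MeasureTheory.integral_star_dotProduct_conjTranspose_diagonal_mul_mulVec
    {𝕜 ι Ω : Type*} [RCLike 𝕜] [Fintype ι] [DecidableEq ι] [MeasurableSpace Ω]
    {μ : Measure Ω}
    {x : Ω → ι → 𝕜} {s : 𝕜}
    (hint : ∀ i j, Integrable (fun ω => x ω i * conj (x ω j)) μ)
    (hcov : ∀ i j, ∫ ω, x ω i * conj (x ω j) ∂μ = if i = j then s else 0)
    (M : Matrix ι ι 𝕜) (b₁ b₂ : ι → 𝕜) :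
    ∫ ω, star b₁ ⬝ᵥ ((diagonal (x ω))ᴴ * M * diagonal (x ω)) *ᵥ b₂ ∂μ
      = s * ∑ i, conj (b₁ i) * M i i * b₂ i := by
  simp only [star_dotProduct_conjTranspose_diagonal_mul_mulVec]
  rw [integral_finsetSum _ fun i _ => integrable_finsetSum _ fun j _ => (hint j i).const_mul _]
  simp only [integral_finsetSum _ fun j _ => (hint j _).const_mul _, integral_const_mul, hcov,
    mul_ite, mul_zero, Finset.sum_ite_eq', Finset.mem_univ, if_true, Finset.mul_sum]
  exact Finset.sum_congr rfl fun _ _ => by ring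

theorem stmt_3_general {Ω : Type*} [MeasurableSpace Ω] (μ : Measure Ω)
    (N : ℕ) (x : Ω → Fin N → ℂ) (σsq : ℝ)
    (hint : ∀ n n' : Fin N, Integrable (fun ω => x ω n * (starRingEnd ℂ) (x ω n')) μ)
    (hcov : ∀ n n' : Fin N,
      ∫ ω, x ω n * (starRingEnd ℂ) (x ω n') ∂μ = if n = n' then (σsq : ℂ) else 0)
    (d : Fin N → ℂ) (b₁ b₂ : Fin N → ℂ) :
    (∫ ω, star b₁ ⬝ᵥ ((Matrix.diagonal (x ω))ᴴ * dftMatrix N * Matrix.diagonal d *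
        (dftMatrix N)ᴴ * Matrix.diagonal (x ω)).mulVec b₂ ∂μ
      = (σsq : ℂ) * (Matrix.trace (Matrix.diagonal d) / (N : ℂ)) * (star b₁ ⬝ᵥ b₂)) ∧
    (star b₁ ⬝ᵥ b₂ = 0 →
      ∫ ω, star b₁ ⬝ᵥ ((Matrix.diagonal (x ω))ᴴ * dftMatrix N * Matrix.diagonal d *
        (dftMatrix N)ᴴ * Matrix.diagonal (x ω)).mulVec b₂ ∂μ = 0) := by
  have hmean : ∫ ω, star b₁ ⬝ᵥ ((diagonal (x ω))ᴴ *
      (dftMatrix N * diagonal d * (dftMatrix N)ᴴ) * diagonal (x ω)) *ᵥ b₂ ∂μ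
        = σsq * (trace (diagonal d) / N) * (star b₁ ⬝ᵥ b₂) := by
    rw [integral_star_dotProduct_conjTranspose_diagonal_mul_mulVec hint hcov]
    simp only [dftMatrix_mul_diagonal_mul_conjTranspose_apply_self, dotProduct, Pi.star_apply,
      RCLike.star_def, Finset.mul_sum]
    exact Finset.sum_congr rfl fun _ _ => by ring
  simp only [Matrix.mul_assoc] at hmean ⊢
  exact ⟨hmean, fun h => by rw [hmean, h, mul_zero]⟩

/-- If `E[x_n conj(x_{n'})] = σ² δ_{n,n'}` and `D` is diagonal, then
`E[b₁ᴴ diag(x)ᴴ F_N D F_Nᴴ diag(x) b₂] = σ² (tr D / N) (b₁ᴴ b₂)`.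
In particular the expectation vanishes when `b₁ᴴ b₂ = 0`. -/
theorem stmt_3 {Ω : Type*} [MeasurableSpace Ω] (μ : Measure Ω) [IsProbabilityMeasure μ]
    (N : ℕ) (x : Ω → Fin N → ℂ) (σsq : ℝ) (hσ : 0 ≤ σsq)
    (hint : ∀ n n' : Fin N, Integrable (fun ω => x ω n * (starRingEnd ℂ) (x ω n')) μ)
    (hcov : ∀ n n' : Fin N,
      ∫ ω, x ω n * (starRingEnd ℂ) (x ω n') ∂μ = if n = n' then (σsq : ℂ) else 0)
    (d : Fin N → ℂ) (b₁ b₂ : Fin N → ℂ) :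
    (∫ ω, star b₁ ⬝ᵥ ((Matrix.diagonal (x ω))ᴴ * dftMatrix N * Matrix.diagonal d *
        (dftMatrix N)ᴴ * Matrix.diagonal (x ω)).mulVec b₂ ∂μ
      = (σsq : ℂ) * (Matrix.trace (Matrix.diagonal d) / (N : ℂ)) * (star b₁ ⬝ᵥ b₂)) ∧
    (star b₁ ⬝ᵥ b₂ = 0 →
      ∫ ω, star b₁ ⬝ᵥ ((Matrix.diagonal (x ω))ᴴ * dftMatrix N * Matrix.diagonal d *
        (dftMatrix N)ᴴ * Matrix.diagonal (x ω)).mulVec b₂ ∂μ = 0) :=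
  stmt_3_general μ N x σsq hint hcov d b₁ b₂
end

section
/- (Exact expectation form of Lemma 1.) Let the K-target noiseless OFDM radar snapshots be Ȳ_m = Σ_{k=0}^{K−1} ᾱ_k · D(ν_k) · F_N^H · diag(x_m) · b(τ_k) · conj([c(ν_k)]_m) · a_k^T ∈ ℂ^{N×N_R}, m = 0, …, M−1, where ᾱ_k ∈ ℂ, a_k ∈ ℂ^{N_R}, and the random data symbols x_{n,m} = [x_m]_n satisfy E[x_{n,m} · conj(x_{n',m})] = σ_x² δ_{n,n'} for every m (all such products integrable). Assume that for every pair k₁ ≠ k₂, either b(τ_{k₁})^H b(τ_{k₂}) = 0 or c(ν_{k₁})^H c(ν_{k₂}) = 0. Then the entrywise expectation of the spatial covariance matrix R = Σ_{m=0}^{M−1} Ȳ_m^H Ȳ_m equals E[R] = N M σ_x² Σ_{k=0}^{K−1} |ᾱ_k|² · a_k^* a_k^T. -/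
open Matrix MeasureTheory

/-- Frequency-domain (delay) steering vector `[b(τ)]_n = e^{-2πi n Δf τ}`. -/
noncomputable def steerB (N : ℕ) (Δf τ : ℝ) : Fin N → ℂ :=
  fun n => Complex.exp (-(2 * (Real.pi : ℂ) * Complex.I * ((n : ℕ) : ℂ) * (Δf : ℂ) * (τ : ℂ)))

/-- Slow-time (Doppler) steering vector `[c(ν)]_m = e^{-2πi f_c m T_sym ν}`. -/
noncomputable def steerC (M : ℕ) (fc Tsym ν : ℝ) : Fin M → ℂ :=
  fun m => Complex.exp (-(2 * (Real.pi : ℂ) * Complex.I * (fc : ℂ) * ((m : ℕ) : ℂ) *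
    (Tsym : ℂ) * (ν : ℂ)))

/-- ICI phase rotation matrix `D(ν) = diag(e^{2πi f_c T n ν / N})_{n=0,…,N-1}`. -/
noncomputable def iciD (N : ℕ) (fc T ν : ℝ) : Matrix (Fin N) (Fin N) ℂ :=
  Matrix.diagonal (fun n =>
    Complex.exp (2 * (Real.pi : ℂ) * Complex.I * (fc : ℂ) * (T : ℂ) * ((n : ℕ) : ℂ) *
      (ν : ℂ) / (N : ℂ)))

/-!
Expanding `Ȳ_mᴴ Ȳ_m` bilinearly in the targets, the `(k₁, k₂)` term carries the random factor
`u_{k₁}ᴴ u_{k₂}` with `u_k = D(ν_k) F_Nᴴ diag(x_m) b(τ_k)`. Whiteness of the data turns its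
expectation into `σ_x² Σ_p conj b_{k₁,p} (F_N D(ν_{k₁})ᴴ D(ν_{k₂}) F_Nᴴ)_{pp} b_{k₂,p}`, and since
every DFT entry has modulus `1/√N`, the diagonal of `F_N Δ F_Nᴴ` is the constant `tr Δ / N` for
every diagonal `Δ`. So the expected cross term is proportional to `b(τ_{k₁})ᴴ b(τ_{k₂})`, while
summing over `m` produces a factor `conj (c(ν_{k₁})ᴴ c(ν_{k₂}))`: one of the two vanishes for
`k₁ ≠ k₂`, and for `k₁ = k₂` all steering vectors have unit-modulus entries.
-/

section Gram

variable {R : Type*} [CommRing R] [StarRing R] {n : Type*} [Fintype n]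

theorem conjTranspose_sum_smul_vecMulVec_mul_sum_smul_vecMulVec {κ r : Type*} [Fintype κ]
    (β : κ → R) (u : κ → n → R) (a : κ → r → R) :
    (∑ k, β k • vecMulVec (u k) (a k))ᴴ * ∑ k, β k • vecMulVec (u k) (a k)
      = ∑ k₁, ∑ k₂, (star (β k₁) * β k₂ * (star (u k₁) ⬝ᵥ u k₂)) •
          vecMulVec (star (a k₁)) (a k₂) := by
  rw [conjTranspose_sum, Matrix.sum_mul]
  simp only [Matrix.mul_sum, conjTranspose_smul, Matrix.smul_mul, Matrix.mul_smul,
    conjTranspose_vecMulVec, vecMulVec_mul_vecMulVec, vecMulVec_smul, smul_smul]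
  refine Finset.sum_congr rfl fun k₁ _ => Finset.sum_congr rfl fun k₂ _ => ?_
  rw [mul_left_comm, mul_assoc]

theorem sum_conjTranspose_mul_sum_smul_vecMulVec_apply {κ ι r : Type*} [Fintype κ] [Fintype ι]
    (s : κ → ι → R) (u : ι → κ → n → R) (a : κ → r → R) (i j : r) :
    (∑ m, (∑ k, s k m • vecMulVec (u m k) (a k))ᴴ * ∑ k, s k m • vecMulVec (u m k) (a k)) i j
      = ∑ k₁, ∑ k₂, star (a k₁ i) * a k₂ j *
          ∑ m, star (s k₁ m) * s k₂ m * (star (u m k₁) ⬝ᵥ u m k₂) := by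
  simp only [conjTranspose_sum_smul_vecMulVec_mul_sum_smul_vecMulVec, Matrix.sum_apply,
    Matrix.smul_apply, vecMulVec_apply, Pi.star_apply, smul_eq_mul, Finset.mul_sum]
  rw [Finset.sum_comm]
  refine Finset.sum_congr rfl fun k₁ _ => ?_
  rw [Finset.sum_comm]
  refine Finset.sum_congr rfl fun k₂ _ => Finset.sum_congr rfl fun m _ => ?_
  ring

theorem star_mul_diagonal_mulVec_dotProduct {m : Type*} [Fintype m] [DecidableEq n]
    (A B : Matrix m n R) (x b c : n → R) :
    star ((A * diagonal x) *ᵥ b) ⬝ᵥ ((B * diagonal x) *ᵥ c)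
      = ∑ p, ∑ q, star (b p) * (Aᴴ * B) p q * c q * (x q * star (x p)) := by
  rw [star_mulVec, dotProduct_mulVec, vecMul_vecMul, conjTranspose_mul, diagonal_conjTranspose,
    Matrix.mul_assoc, ← Matrix.mul_assoc Aᴴ]
  simp only [dotProduct, vecMul, diagonal_mul, mul_diagonal, Pi.star_apply, Finset.sum_mul]
  rw [Finset.sum_comm]
  refine Finset.sum_congr rfl fun q _ => Finset.sum_congr rfl fun p _ => ?_
  ring

theorem star_dotProduct_self_eq_card {v : n → R} (hv : ∀ i, star (v i) * v i = 1) :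
    star v ⬝ᵥ v = Fintype.card n := by
  simp [dotProduct, hv]

theorem star_smul_star_dotProduct_smul_star (α₁ α₂ : R) (c₁ c₂ : n → R) :
    star (α₁ • star c₁) ⬝ᵥ (α₂ • star c₂) = star α₁ * α₂ * star (star c₁ ⬝ᵥ c₂) := by
  simp only [dotProduct, Pi.star_apply, Pi.smul_apply, smul_eq_mul, star_sum, star_mul',
    star_star, Finset.mul_sum]
  refine Finset.sum_congr rfl fun i _ => ?_
  ring

end Gram

section WhiteData

variable {Ω 𝕜 n m : Type*} [MeasurableSpace Ω] {μ : Measure Ω} [RCLike 𝕜] [Fintype n]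
  [DecidableEq n] [Fintype m] {x : Ω → n → 𝕜}

theorem integrable_star_mul_diagonal_mulVec_dotProduct
    (hint : ∀ p q, Integrable (fun ω => x ω p * starRingEnd 𝕜 (x ω q)) μ)
    (A B : Matrix m n 𝕜) (b c : n → 𝕜) :
    Integrable (fun ω => star ((A * diagonal (x ω)) *ᵥ b) ⬝ᵥ ((B * diagonal (x ω)) *ᵥ c)) μ := by
  simp only [starRingEnd_apply] at hint
  simp only [star_mul_diagonal_mulVec_dotProduct]
  fun_prop

theorem integral_star_mul_diagonal_mulVec_dotProduct
    (hint : ∀ p q, Integrable (fun ω => x ω p * starRingEnd 𝕜 (x ω q)) μ) {σ : 𝕜}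
    (hcov : ∀ p q, ∫ ω, x ω p * starRingEnd 𝕜 (x ω q) ∂μ = if p = q then σ else 0)
    (A B : Matrix m n 𝕜) (b c : n → 𝕜) :
    ∫ ω, star ((A * diagonal (x ω)) *ᵥ b) ⬝ᵥ ((B * diagonal (x ω)) *ᵥ c) ∂μ
      = σ * ∑ p, star (b p) * (Aᴴ * B) p p * c p := by
  simp only [starRingEnd_apply] at hint hcov
  simp only [star_mul_diagonal_mulVec_dotProduct]
  rw [integral_finsetSum _ fun p _ => integrable_finsetSum _ fun q _ => (hint q p).const_mul _]
  simp only [integral_finsetSum _ fun q _ => (hint q _).const_mul _, integral_const_mul, hcov,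
    mul_ite, mul_zero, Finset.sum_ite_eq', Finset.mem_univ, if_true, Finset.mul_sum]
  refine Finset.sum_congr rfl fun p _ => ?_
  ring

end WhiteData

theorem star_exp_mul_exp_of_conj_eq_neg {z : ℂ} (hz : starRingEnd ℂ z = -z) :
    star (Complex.exp z) * Complex.exp z = 1 := by
  rw [← starRingEnd_apply, ← Complex.exp_conj, hz, ← Complex.exp_add, neg_add_cancel,
    Complex.exp_zero]

theorem star_steerB_dotProduct_self (N : ℕ) (Δf τ : ℝ) :
    star (steerB N Δf τ) ⬝ᵥ steerB N Δf τ = N := by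
  refine (star_dotProduct_self_eq_card fun _ => star_exp_mul_exp_of_conj_eq_neg ?_).trans (by simp)
  simp [map_ofNat]

theorem star_steerC_dotProduct_self (M : ℕ) (fc Tsym ν : ℝ) :
    star (steerC M fc Tsym ν) ⬝ᵥ steerC M fc Tsym ν = M := by
  refine (star_dotProduct_self_eq_card fun _ => star_exp_mul_exp_of_conj_eq_neg ?_).trans (by simp)
  simp [map_ofNat]

theorem star_iciD_diag_dotProduct_self (N : ℕ) (fc T ν : ℝ) :
    star (iciD N fc T ν).diag ⬝ᵥ (iciD N fc T ν).diag = N := by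
  rw [iciD, diag_diagonal]
  refine (star_dotProduct_self_eq_card fun _ => star_exp_mul_exp_of_conj_eq_neg ?_).trans (by simp)
  simp [map_ofNat]
  ring

theorem isDiag_iciD (N : ℕ) (fc T ν : ℝ) : (iciD N fc T ν).IsDiag :=
  isDiag_diagonal _

theorem dftMatrix_apply_mul_star (N : ℕ) (p n : Fin N) :
    dftMatrix N p n * star (dftMatrix N p n) = (N : ℂ)⁻¹ := by
  rw [dftMatrix, star_mul', mul_mul_mul_comm, mul_comm (Complex.exp _),
    star_exp_mul_exp_of_conj_eq_neg (by simp [map_ofNat]; ring), ← starRingEnd_apply, map_div₀,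
    map_one, Complex.conj_ofReal, mul_one, div_mul_div_comm, one_mul, ← Complex.ofReal_mul,
    Real.mul_self_sqrt N.cast_nonneg, Complex.ofReal_natCast, one_div]

theorem dftMatrix_conjTranspose_gram_apply_self {N : ℕ} {D₁ D₂ : Matrix (Fin N) (Fin N) ℂ}
    (h₁ : D₁.IsDiag) (h₂ : D₂.IsDiag) (p : Fin N) :
    ((D₁ * (dftMatrix N)ᴴ)ᴴ * (D₂ * (dftMatrix N)ᴴ)) p p = (star D₁.diag ⬝ᵥ D₂.diag) / N := by
  obtain ⟨d₁, rfl⟩ : ∃ d, D₁ = diagonal d := ⟨_, h₁.diagonal_diag.symm⟩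
  obtain ⟨d₂, rfl⟩ : ∃ d, D₂ = diagonal d := ⟨_, h₂.diagonal_diag.symm⟩
  rw [mul_apply]
  simp only [conjTranspose_apply, diagonal_mul, star_mul', star_star, diag_diagonal,
    dotProduct, Pi.star_apply, Finset.sum_div]
  refine Finset.sum_congr rfl fun n _ => ?_
  rw [div_eq_mul_inv, ← dftMatrix_apply_mul_star N p n]
  ring

noncomputable def ofdmEcho {N : ℕ} (D : Matrix (Fin N) (Fin N) ℂ) (x b : Fin N → ℂ) : Fin N → ℂ :=
  (D * (dftMatrix N)ᴴ * diagonal x) *ᵥ b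

theorem integral_star_ofdmEcho_dotProduct_ofdmEcho {Ω : Type*} [MeasurableSpace Ω] {μ : Measure Ω}
    {N : ℕ} {x : Ω → Fin N → ℂ}
    (hint : ∀ p q, Integrable (fun ω => x ω p * starRingEnd ℂ (x ω q)) μ) {σ : ℂ}
    (hcov : ∀ p q, ∫ ω, x ω p * starRingEnd ℂ (x ω q) ∂μ = if p = q then σ else 0)
    {D₁ D₂ : Matrix (Fin N) (Fin N) ℂ} (h₁ : D₁.IsDiag) (h₂ : D₂.IsDiag) (b₁ b₂ : Fin N → ℂ) :
    ∫ ω, star (ofdmEcho D₁ (x ω) b₁) ⬝ᵥ ofdmEcho D₂ (x ω) b₂ ∂μ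
      = σ * (star D₁.diag ⬝ᵥ D₂.diag) / N * (star b₁ ⬝ᵥ b₂) := by
  simp only [ofdmEcho, integral_star_mul_diagonal_mulVec_dotProduct hint hcov,
    dftMatrix_conjTranspose_gram_apply_self h₁ h₂]
  set γ := star D₁.diag ⬝ᵥ D₂.diag
  simp only [dotProduct, Pi.star_apply, Finset.mul_sum]
  refine Finset.sum_congr rfl fun p _ => ?_
  ring

theorem integral_sum_conjTranspose_mul_self_apply {Ω κ ι r : Type*} [MeasurableSpace Ω]
    {μ : Measure Ω} [Fintype κ] [Fintype ι] {N : ℕ} {x : Ω → ι → Fin N → ℂ}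
    (hint : ∀ m p q, Integrable (fun ω => x ω m p * starRingEnd ℂ (x ω m q)) μ) {σ : ℂ}
    (hcov : ∀ m p q, ∫ ω, x ω m p * starRingEnd ℂ (x ω m q) ∂μ = if p = q then σ else 0)
    {D : κ → Matrix (Fin N) (Fin N) ℂ} (hD : ∀ k, (D k).IsDiag) (s : κ → ι → ℂ)
    (b : κ → Fin N → ℂ) (a : κ → r → ℂ) (i j : r) :
    ∫ ω, (∑ m, (∑ k, s k m • vecMulVec (ofdmEcho (D k) (x ω m) (b k)) (a k))ᴴ *
        ∑ k, s k m • vecMulVec (ofdmEcho (D k) (x ω m) (b k)) (a k)) i j ∂μ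
      = ∑ k₁, ∑ k₂, star (a k₁ i) * a k₂ j * ((star (s k₁) ⬝ᵥ s k₂) *
          (σ * (star (D k₁).diag ⬝ᵥ (D k₂).diag) / N * (star (b k₁) ⬝ᵥ b k₂))) := by
  have hQ : ∀ m k₁ k₂, Integrable (fun ω =>
      star (ofdmEcho (D k₁) (x ω m) (b k₁)) ⬝ᵥ ofdmEcho (D k₂) (x ω m) (b k₂)) μ :=
    fun m _ _ => integrable_star_mul_diagonal_mulVec_dotProduct (hint m) _ _ _ _
  simp only [sum_conjTranspose_mul_sum_smul_vecMulVec_apply]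
  simp (disch := fun_prop) only [integral_finsetSum, integral_const_mul,
    integral_star_ofdmEcho_dotProduct_ofdmEcho (hint _) (hcov _) (hD _) (hD _)]
  simp only [dotProduct, Pi.star_apply, Finset.sum_mul]

theorem stmt_6_general {Ω : Type*} [MeasurableSpace Ω] (μ : Measure Ω)
    (N M NR K : ℕ) (Δf fc T Tsym : ℝ)
    (τ ν : Fin K → ℝ) (αbar : Fin K → ℂ) (a : Fin K → Fin NR → ℂ)
    (x : Ω → Fin M → Fin N → ℂ) (σxsq : ℝ)
    (hint : ∀ (m : Fin M) (n n' : Fin N),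
      Integrable (fun ω => x ω m n * (starRingEnd ℂ) (x ω m n')) μ)
    (hcov : ∀ (m : Fin M) (n n' : Fin N),
      ∫ ω, x ω m n * (starRingEnd ℂ) (x ω m n') ∂μ = if n = n' then (σxsq : ℂ) else 0)
    (horth : ∀ k₁ k₂ : Fin K, k₁ ≠ k₂ →
      star (steerB N Δf (τ k₁)) ⬝ᵥ steerB N Δf (τ k₂) = 0 ∨
      star (steerC M fc Tsym (ν k₁)) ⬝ᵥ steerC M fc Tsym (ν k₂) = 0)
    (Y : Ω → Fin M → Matrix (Fin N) (Fin NR) ℂ)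
    (hY : ∀ ω m, Y ω m = ∑ k,
      (αbar k * (starRingEnd ℂ) (steerC M fc Tsym (ν k) m)) •
        Matrix.vecMulVec
          ((iciD N fc T (ν k) * (dftMatrix N)ᴴ * Matrix.diagonal (x ω m)).mulVec
            (steerB N Δf (τ k)))
          (a k)) :
    ∀ i j, ∫ ω, (∑ m, (Y ω m)ᴴ * Y ω m) i j ∂μ
      = (N : ℂ) * (M : ℂ) * (σxsq : ℂ) *
          ∑ k, ((‖αbar k‖ ^ 2 : ℝ) : ℂ) * ((starRingEnd ℂ) (a k i) * a k j) := by
  intro i j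
  have hY' : ∀ ω m, Y ω m = ∑ k, (αbar k • star (steerC M fc Tsym (ν k))) m •
      vecMulVec (ofdmEcho (iciD N fc T (ν k)) (x ω m) (steerB N Δf (τ k))) (a k) := hY
  simp only [hY', integral_sum_conjTranspose_mul_self_apply hint hcov (fun k => isDiag_iciD ..),
    Finset.mul_sum]
  refine Finset.sum_congr rfl fun k _ => ?_
  rw [Finset.sum_eq_single_of_mem k (Finset.mem_univ _) fun k₂ _ hne => ?_]
  · rw [star_smul_star_dotProduct_smul_star, star_steerC_dotProduct_self,
      star_iciD_diag_dotProduct_self, star_steerB_dotProduct_self, star_natCast,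
      div_mul_cancel_of_imp fun h => by simp [h], ← starRingEnd_apply (αbar k), Complex.conj_mul',
      starRingEnd_apply]
    push_cast
    ring
  · rcases horth k k₂ hne.symm with hb | hc
    · simp only [hb, mul_zero]
    · simp only [star_smul_star_dotProduct_smul_star, hc, star_zero, mul_zero, zero_mul]

/-- Exact expectation form of Lemma 1: for the `K`-target noiseless snapshots
`Ȳ_m = Σ_k ᾱ_k D(ν_k) F_Nᴴ diag(x_m) b(τ_k) conj([c(ν_k)]_m) a_kᵀ`, if the random data
symbols are uncorrelated with variance `σ_x²` and targets are pairwise non-overlapping in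
delay or Doppler, then `E[Σ_m Ȳ_mᴴ Ȳ_m] = N M σ_x² Σ_k |ᾱ_k|² a_k^* a_kᵀ` entrywise. -/
theorem stmt_6 {Ω : Type*} [MeasurableSpace Ω] (μ : Measure Ω) [IsProbabilityMeasure μ]
    (N M NR K : ℕ) (Δf fc T Tsym : ℝ)
    (hΔf : 0 < Δf) (hfc : 0 < fc) (hT : 0 < T) (hTsym : 0 < Tsym)
    (τ ν : Fin K → ℝ) (αbar : Fin K → ℂ) (a : Fin K → Fin NR → ℂ)
    (x : Ω → Fin M → Fin N → ℂ) (σxsq : ℝ) (hσ : 0 ≤ σxsq)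
    (hint : ∀ (m : Fin M) (n n' : Fin N),
      Integrable (fun ω => x ω m n * (starRingEnd ℂ) (x ω m n')) μ)
    (hcov : ∀ (m : Fin M) (n n' : Fin N),
      ∫ ω, x ω m n * (starRingEnd ℂ) (x ω m n') ∂μ = if n = n' then (σxsq : ℂ) else 0)
    (horth : ∀ k₁ k₂ : Fin K, k₁ ≠ k₂ →
      star (steerB N Δf (τ k₁)) ⬝ᵥ steerB N Δf (τ k₂) = 0 ∨
      star (steerC M fc Tsym (ν k₁)) ⬝ᵥ steerC M fc Tsym (ν k₂) = 0)
    (Y : Ω → Fin M → Matrix (Fin N) (Fin NR) ℂ)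
    (hY : ∀ ω m, Y ω m = ∑ k,
      (αbar k * (starRingEnd ℂ) (steerC M fc Tsym (ν k) m)) •
        Matrix.vecMulVec
          ((iciD N fc T (ν k) * (dftMatrix N)ᴴ * Matrix.diagonal (x ω m)).mulVec
            (steerB N Δf (τ k)))
          (a k)) :
    ∀ i j, ∫ ω, (∑ m, (Y ω m)ᴴ * Y ω m) i j ∂μ
      = (N : ℂ) * (M : ℂ) * (σxsq : ℂ) *
          ∑ k, ((‖αbar k‖ ^ 2 : ℝ) : ℂ) * ((starRingEnd ℂ) (a k i) * a k j) :=
  stmt_6_general μ N M NR K Δf fc T Tsym τ ν αbar a x σxsq hint hcov horth Y hY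
end

section
/- (Closed-form value of the APES beamforming problem.) Fix matrices Ȳ_0, …, Ȳ_{M−1} ∈ ℂ^{N×N_R}, matrices X̄_0, …, X̄_{M−1} ∈ ℂ^{N×L} each with full column rank, a unitary matrix D ∈ ℂ^{N×N}, and a nonzero vector a ∈ ℂ^{N_R}. Define Q = Σ_{m=0}^{M−1} Ȳ_m^H D (I − X̄_m (X̄_m^H X̄_m)^{-1} X̄_m^H) D^H Ȳ_m, and assume Q is positive definite. Then the minimum of Σ_{m=0}^{M−1} ‖ Ȳ_m w^* − D X̄_m h_m ‖² over all w ∈ ℂ^{N_R} with w^H a = 1 and all h_0, …, h_{M−1} ∈ ℂ^L equals 1 / ( a^H (Q^*)^{-1} a ). -/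
/-!
For fixed `w`, each summand is a least-squares problem in `h_m`: if `P` is the orthogonal
projection onto the column space of `B = D X̄_m` and `u = Ȳ_m w^*`, the residual splits orthogonally
as `u − B h = (1 − P) u + B (ĥ − h)` with `ĥ = (Bᴴ B)⁻¹ Bᴴ u`, so the minimum over `h` is
`uᴴ (1 − P) u`. For unitary `D`, `1 − P = D (I − X̄_m (X̄_mᴴ X̄_m)⁻¹ X̄_mᴴ) Dᴴ`, so summing over `m`
leaves `(w^*)ᴴ Q w^* = conj (wᴴ Q^* w)`. Minimizing the positive definite form `wᴴ R w` under
`wᴴ a = 1` is done by completing the square around `w₀ = R⁻¹ a / (aᴴ R⁻¹ a)`: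
`wᴴ R w = 1 / (aᴴ R⁻¹ a) + (w − w₀)ᴴ R (w − w₀)`.
-/

open Matrix
open scoped ComplexOrder

namespace Matrix

variable {α n m l : Type*}

lemma star_mulVec_dotProduct_mulVec [Fintype n] [Fintype m] [Fintype l] [CommSemiring α]
    [StarRing α] (A : Matrix n m α) (B : Matrix n l α) (x : m → α) (y : l → α) :
    star (A *ᵥ x) ⬝ᵥ B *ᵥ y = star x ⬝ᵥ (Aᴴ * B) *ᵥ y := by
  rw [star_mulVec, dotProduct_mulVec, vecMul_vecMul, ← dotProduct_mulVec]

lemma star_star_dotProduct_mulVec_star [Fintype n] [CommSemiring α] [StarRing α]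
    (A : Matrix n n α) (w : n → α) :
    star (star w) ⬝ᵥ A *ᵥ star w = star (star w ⬝ᵥ A.map star *ᵥ w) := by
  simp only [dotProduct, mulVec, Pi.star_apply, star_star, map_apply, star_sum, star_mul']

lemma PosDef.map_star [CommRing α] [PartialOrder α] [StarRing α] {M : Matrix n n α}
    (hM : M.PosDef) : (M.map star).PosDef := by
  rw [← conjTranspose_transpose, hM.isHermitian.eq]
  exact hM.transpose

lemma re_star_dotProduct_self [Fintype n] (z : n → ℂ) :
    (star z ⬝ᵥ z).re = ∑ i, ‖z i‖ ^ 2 := by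
  simp [dotProduct, Complex.conj_mul', ← Complex.ofReal_pow, Complex.re_sum]

noncomputable def leastSquaresSol [Fintype n] [Fintype l] [DecidableEq l] [Field α] [StarRing α]
    (B : Matrix n l α) (u : n → α) : l → α :=
  ((Bᴴ * B)⁻¹ * Bᴴ) *ᵥ u

lemma star_sub_mulVec_dotProduct_self [Fintype n] [Fintype l] [DecidableEq n] [DecidableEq l]
    [Field α] [StarRing α] (B : Matrix n l α) (hB : IsUnit (Bᴴ * B)) (u : n → α) (h : l → α) :
    star (u - B *ᵥ h) ⬝ᵥ (u - B *ᵥ h) =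
      star u ⬝ᵥ (1 - B * (Bᴴ * B)⁻¹ * Bᴴ) *ᵥ u +
        star (B *ᵥ (leastSquaresSol B u - h)) ⬝ᵥ B *ᵥ (leastSquaresSol B u - h) := by
  have hG : (Bᴴ * B)⁻¹ * (Bᴴ * B) = 1 := nonsing_inv_mul _ ((isUnit_iff_isUnit_det _).mp hB)
  have hGH : (Bᴴ * B)⁻¹ᴴ = (Bᴴ * B)⁻¹ := by
    rw [conjTranspose_nonsing_inv, conjTranspose_mul, conjTranspose_conjTranspose]
  set P := B * (Bᴴ * B)⁻¹ * Bᴴ with hP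
  have hPH : (1 - P)ᴴ = 1 - P := by
    rw [conjTranspose_sub, conjTranspose_one, hP, conjTranspose_mul, conjTranspose_mul, hGH,
      conjTranspose_conjTranspose, Matrix.mul_assoc]
  have hPB : (1 - P) * B = 0 := by
    rw [Matrix.sub_mul, Matrix.one_mul, hP, Matrix.mul_assoc, Matrix.mul_assoc, hG,
      Matrix.mul_one, sub_self]
  have hBP : Bᴴ * (1 - P) = 0 := by
    simpa only [hPH, conjTranspose_mul, conjTranspose_zero] using congrArg conjTranspose hPB
  have hPP : (1 - P) * (1 - P) = 1 - P := by
    have hPP' : (1 - P) * P = 0 := by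
      rw [hP, ← Matrix.mul_assoc, ← Matrix.mul_assoc, hPB, Matrix.zero_mul, Matrix.zero_mul]
    rw [Matrix.mul_sub, hPP', Matrix.mul_one, sub_zero]
  have hsplit : u - B *ᵥ h = (1 - P) *ᵥ u + B *ᵥ (leastSquaresSol B u - h) := by
    simp only [leastSquaresSol, mulVec_sub, mulVec_mulVec, sub_mulVec, one_mulVec, hP,
      Matrix.mul_assoc]
    abel
  rw [hsplit, star_add, add_dotProduct, dotProduct_add, dotProduct_add]
  simp only [star_mulVec_dotProduct_mulVec, hPH, hPP, hPB, hBP, zero_mulVec, dotProduct_zero,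
    add_zero, zero_add]

lemma conjTranspose_mul_mul_of_unitary [Fintype n] [DecidableEq n] [CommRing α] [StarRing α]
    {D : Matrix n n α} (hD : Dᴴ * D = 1) (X : Matrix n l α) : (D * X)ᴴ * (D * X) = Xᴴ * X := by
  rw [conjTranspose_mul, Matrix.mul_assoc, ← Matrix.mul_assoc Dᴴ, hD, Matrix.one_mul]

lemma one_sub_proj_of_unitary [Fintype n] [Fintype l] [DecidableEq n] [DecidableEq l] [Field α]
    [StarRing α] {D : Matrix n n α} (hD : Dᴴ * D = 1) (X : Matrix n l α) :
    1 - D * X * ((D * X)ᴴ * (D * X))⁻¹ * (D * X)ᴴ = D * (1 - X * (Xᴴ * X)⁻¹ * Xᴴ) * Dᴴ := by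
  rw [conjTranspose_mul_mul_of_unitary hD, Matrix.mul_sub, Matrix.sub_mul, Matrix.mul_one,
    mul_eq_one_comm.mp hD, conjTranspose_mul]
  simp only [Matrix.mul_assoc]

lemma sum_norm_sq_sub_unitary_mul_mulVec [Fintype n] [Fintype m] [Fintype l] [DecidableEq n]
    [DecidableEq l] (Y : Matrix n m ℂ) (X : Matrix n l ℂ) (hX : IsUnit (Xᴴ * X))
    {D : Matrix n n ℂ} (hD : Dᴴ * D = 1) (v : m → ℂ) (h : l → ℂ) :
    ∑ i, ‖(Y *ᵥ v - (D * X) *ᵥ h) i‖ ^ 2 =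
      (star v ⬝ᵥ (Yᴴ * D * (1 - X * (Xᴴ * X)⁻¹ * Xᴴ) * Dᴴ * Y) *ᵥ v).re +
        ∑ i, ‖((D * X) *ᵥ (leastSquaresSol (D * X) (Y *ᵥ v) - h)) i‖ ^ 2 := by
  rw [← conjTranspose_mul_mul_of_unitary hD] at hX
  rw [← re_star_dotProduct_self, star_sub_mulVec_dotProduct_self _ hX, Complex.add_re,
    re_star_dotProduct_self, one_sub_proj_of_unitary hD, star_mulVec_dotProduct_mulVec,
    mulVec_mulVec]
  simp only [Matrix.mul_assoc]

lemma isLeast_re_star_dotProduct_mulVec [Fintype n] [DecidableEq n] {R : Matrix n n ℂ}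
    (hR : R.PosDef) {a : n → ℂ} (ha : a ≠ 0) :
    IsLeast {r : ℝ | ∃ w, star w ⬝ᵥ a = 1 ∧ r = (star w ⬝ᵥ R *ᵥ w).re}
      (1 / (star a ⬝ᵥ R⁻¹ *ᵥ a)).re := by
  set c := star a ⬝ᵥ R⁻¹ *ᵥ a
  have hc : 0 < c := hR.inv.dotProduct_mulVec_pos ha
  have hcstar : star c = c := Complex.conj_eq_iff_im.mpr (Complex.lt_def.mp hc).2.symm
  have hRR : R * R⁻¹ = 1 := mul_nonsing_inv R ((isUnit_iff_isUnit_det R).mp hR.isUnit)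
  set w₀ := c⁻¹ • R⁻¹ *ᵥ a
  have hRw₀ : R *ᵥ w₀ = c⁻¹ • a := by rw [mulVec_smul, mulVec_mulVec, hRR, one_mulVec]
  have hw₀R (w : n → ℂ) : star w₀ ⬝ᵥ R *ᵥ w = c⁻¹ * star (star w ⬝ᵥ a) := by
    rw [dotProduct_mulVec, ← hR.isHermitian.eq, ← star_mulVec, hRw₀, star_smul, smul_dotProduct,
      star_dotProduct, star_inv₀, hcstar, smul_eq_mul]
  have hw₀a : star w₀ ⬝ᵥ a = 1 := by
    rw [star_smul, smul_dotProduct, star_dotProduct, star_inv₀, hcstar, smul_eq_mul]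
    exact inv_mul_cancel₀ hc.ne'
  have hquad (w : n → ℂ) (hw : star w ⬝ᵥ a = 1) :
      star w ⬝ᵥ R *ᵥ w = c⁻¹ + star (w - w₀) ⬝ᵥ R *ᵥ (w - w₀) := by
    simp only [star_sub, mulVec_sub, dotProduct_sub, sub_dotProduct, hRw₀, dotProduct_smul, hw,
      hw₀R, hw₀a, smul_eq_mul, star_one]
    ring
  refine ⟨⟨w₀, hw₀a, ?_⟩, ?_⟩
  · rw [hRw₀, dotProduct_smul, hw₀a, smul_eq_mul, mul_one, one_div]
  · rintro r ⟨w, hw, rfl⟩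
    rw [hquad w hw, Complex.add_re, one_div]
    exact le_add_of_nonneg_right (Complex.le_def.mp (hR.posSemidef.dotProduct_mulVec_nonneg _)).1

end Matrix

/-- Closed-form value of the APES beamforming problem: with
`Q = Σ_m Ȳ_mᴴ D (I − X̄_m (X̄_mᴴ X̄_m)⁻¹ X̄_mᴴ) Dᴴ Ȳ_m` positive definite, the minimum of
`Σ_m ‖Ȳ_m w^* − D X̄_m h_m‖²` over `wᴴ a = 1` and all `h_m` equals `1/(aᴴ (Q^*)⁻¹ a)`. -/
theorem stmt_9 (N NR L M : ℕ) (Y : Fin M → Matrix (Fin N) (Fin NR) ℂ)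
    (X : Fin M → Matrix (Fin N) (Fin L) ℂ) (hX : ∀ m, IsUnit ((X m)ᴴ * X m))
    (D : Matrix (Fin N) (Fin N) ℂ) (hD : Dᴴ * D = 1)
    (a : Fin NR → ℂ) (ha : a ≠ 0)
    (Q : Matrix (Fin NR) (Fin NR) ℂ)
    (hQ : Q = ∑ m, (Y m)ᴴ * D * (1 - X m * ((X m)ᴴ * X m)⁻¹ * (X m)ᴴ) * Dᴴ * Y m)
    (hQpd : Q.PosDef) :
    IsLeast { r : ℝ | ∃ (w : Fin NR → ℂ) (h : Fin M → Fin L → ℂ),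
        star w ⬝ᵥ a = 1 ∧
        r = ∑ m, ∑ i,
          ‖((Y m).mulVec (star w) - (D * X m).mulVec (h m)) i‖ ^ 2 }
      ((1 / (star a ⬝ᵥ ((Q.map (starRingEnd ℂ))⁻¹).mulVec a)).re) := by
  have hobj (w : Fin NR → ℂ) (h : Fin M → Fin L → ℂ) :
      ∑ m, ∑ i, ‖(Y m *ᵥ star w - (D * X m) *ᵥ h m) i‖ ^ 2 =
        (star w ⬝ᵥ Q.map (starRingEnd ℂ) *ᵥ w).re +
          ∑ m, ∑ i, ‖((D * X m) *ᵥ (leastSquaresSol (D * X m) (Y m *ᵥ star w) - h m)) i‖ ^ 2 := by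
    simp only [sum_norm_sq_sub_unitary_mul_mulVec _ _ (hX _) hD]
    rw [Finset.sum_add_distrib, ← Complex.re_sum, ← dotProduct_sum, ← sum_mulVec, ← hQ,
      star_star_dotProduct_mulVec_star]
    exact congrArg (· + _) (Complex.conj_re _)
  obtain ⟨⟨w₀, hw₀a, hw₀⟩, hmin⟩ :=
    isLeast_re_star_dotProduct_mulVec (R := Q.map (starRingEnd ℂ)) hQpd.map_star ha
  refine ⟨⟨w₀, fun m => leastSquaresSol (D * X m) (Y m *ᵥ star w₀), hw₀a, ?_⟩, ?_⟩
  · rw [hw₀, hobj]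
    simp
  · rintro r ⟨w, h, hw, rfl⟩
    rw [hobj]
    have hq := hmin ⟨w, hw, rfl⟩
    have hres : 0 ≤ ∑ m, ∑ i,
        ‖((D * X m) *ᵥ (leastSquaresSol (D * X m) (Y m *ᵥ star w) - h m)) i‖ ^ 2 := by
      positivity
    linarith
end
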